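/- arXiv:2308.15642 — 5 statements merged into one kernel-verified Lean document; each statement's English description precedes it below -/
import Mathlib

section
/- Let M and H be real symmetric n×n matrices with n ≥ 2, and let v_1 be a unit-norm eigenvector of M corresponding to its largest eigenvalue λ_1(M). If λ_1(M) − λ_2(M) ≥ 2‖H‖_op, then λ_1(M+H) ≤ λ_1(M) + v_1ᵀ H v_1 + 2‖H v_1‖_2² / (λ_1(M) − λ_2(M)). -/
/-!
Write the top unit eigenvector of `M + H` as `u = α v + w` with `w ⟂ v`, put `s = vᵀHv`, let
`δ = λ₁(M) - λ₂(M)` and let `ρ = λ₁(M + H) - λ₁(M) - s`, which is `≥ 0` by the Rayleigh quotient at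
`v`. Testing the eigen-equation against `v` gives `ρ α = ⟪w, Hv⟫`; testing it against `w`, where
`M` is at most `λ₂(M)` because the gap pins `v` to the top eigenline, gives
`(δ + s + ρ - ‖H‖) ‖w‖² ≤ α ⟪w, Hv⟫`. Cauchy–Schwarz on `v⟂` gives
`⟪w, Hv⟫² ≤ ‖w‖² (‖Hv‖² - s²)`, and eliminating `α` and `w` leaves
`ρ δ / 2 + (ρ² + ρ s + s²) ≤ ‖Hv‖²`.
-/
open Matrix

/-- The eigenvalues of a real symmetric matrix, listed in decreasing order
(`eigDesc hM i` is the `(i+1)`-th largest eigenvalue, counted with multiplicity). -/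
noncomputable def eigDesc {n : ℕ} {M : Matrix (Fin n) (Fin n) ℝ} (hM : M.IsHermitian) :
    Fin n → ℝ :=
  fun i => -(((fun j => -hM.eigenvalues j) ∘ Tuple.sort (fun j => -hM.eigenvalues j)) i)

/-- The ℓ²→ℓ² operator norm (largest singular value) of a real matrix. -/
noncomputable def opNorm {m n : ℕ} (M : Matrix (Fin m) (Fin n) ℝ) : ℝ :=
  ‖(Matrix.toEuclideanLin M).toContinuousLinearMap‖

section DotProduct

variable {ι : Type*} [Fintype ι]

lemma dotProduct_eq_inner_toLp (x y : ι → ℝ) :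
    x ⬝ᵥ y = inner ℝ (WithLp.toLp 2 x) (WithLp.toLp 2 y) := by
  simp [EuclideanSpace.inner_toLp_toLp, dotProduct_comm]

lemma sq_dotProduct_le (x y : ι → ℝ) : (x ⬝ᵥ y) ^ 2 ≤ (x ⬝ᵥ x) * (y ⬝ᵥ y) := by
  simp only [dotProduct_eq_inner_toLp, sq]
  exact real_inner_mul_inner_self_le _ _

lemma sq_dotProduct_le_of_dotProduct_eq_zero {v w : ι → ℝ} (hv : v ⬝ᵥ v = 1) (hvw : v ⬝ᵥ w = 0)
    (y : ι → ℝ) : (w ⬝ᵥ y) ^ 2 ≤ (w ⬝ᵥ w) * (y ⬝ᵥ y - (v ⬝ᵥ y) ^ 2) := by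
  have hproj : w ⬝ᵥ y = w ⬝ᵥ (y - (v ⬝ᵥ y) • v) := by
    simp [dotProduct_sub, dotProduct_comm w v, hvw]
  have hnorm : (y - (v ⬝ᵥ y) • v) ⬝ᵥ (y - (v ⬝ᵥ y) • v) = y ⬝ᵥ y - (v ⬝ᵥ y) ^ 2 := by
    simp only [dotProduct_sub, sub_dotProduct, dotProduct_smul, smul_dotProduct, hv,
      dotProduct_comm y v, smul_eq_mul]
    ring
  rw [hproj, ← hnorm]
  exact sq_dotProduct_le _ _

lemma Matrix.IsHermitian.dotProduct_mulVec_comm {A : Matrix ι ι ℝ} (hA : A.IsHermitian)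
    (x y : ι → ℝ) : x ⬝ᵥ A *ᵥ y = A *ᵥ x ⬝ᵥ y := by
  rw [dotProduct_mulVec, ← mulVec_transpose, ← conjTranspose_eq_transpose_of_trivial, hA.eq,
    dotProduct_comm]

end DotProduct

namespace Matrix.IsHermitian

variable {ι : Type*} [Fintype ι] [DecidableEq ι] {A : Matrix ι ι ℝ} (hA : A.IsHermitian)
include hA

lemma dotProduct_eq_sum_eigenvectorBasis (x y : ι → ℝ) :
    x ⬝ᵥ y = ∑ i, (⇑(hA.eigenvectorBasis i) ⬝ᵥ x) * (⇑(hA.eigenvectorBasis i) ⬝ᵥ y) := by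
  rw [dotProduct_eq_inner_toLp, ← hA.eigenvectorBasis.sum_inner_mul_inner]
  exact Finset.sum_congr rfl fun i _ ↦ by
    rw [dotProduct_eq_inner_toLp, dotProduct_eq_inner_toLp, WithLp.toLp_ofLp, real_inner_comm]

lemma eigenvectorBasis_dotProduct_mulVec (i : ι) (x : ι → ℝ) :
    ⇑(hA.eigenvectorBasis i) ⬝ᵥ A *ᵥ x = hA.eigenvalues i * (⇑(hA.eigenvectorBasis i) ⬝ᵥ x) := by
  rw [hA.dotProduct_mulVec_comm, hA.mulVec_eigenvectorBasis, smul_dotProduct,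
    smul_eq_mul]

lemma dotProduct_mulVec_eq_sum (x : ι → ℝ) :
    x ⬝ᵥ A *ᵥ x = ∑ i, hA.eigenvalues i * (⇑(hA.eigenvectorBasis i) ⬝ᵥ x) ^ 2 := by
  simp only [hA.dotProduct_eq_sum_eigenvectorBasis x, hA.eigenvectorBasis_dotProduct_mulVec]
  exact Finset.sum_congr rfl fun i _ ↦ by ring

lemma dotProduct_mulVec_le_of_forall {c : ℝ} (x : ι → ℝ)
    (h : ∀ i, ⇑(hA.eigenvectorBasis i) ⬝ᵥ x ≠ 0 → hA.eigenvalues i ≤ c) :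
    x ⬝ᵥ A *ᵥ x ≤ c * (x ⬝ᵥ x) := by
  rw [hA.dotProduct_mulVec_eq_sum, hA.dotProduct_eq_sum_eigenvectorBasis x x, Finset.mul_sum]
  refine Finset.sum_le_sum fun i _ ↦ ?_
  by_cases hi : ⇑(hA.eigenvectorBasis i) ⬝ᵥ x = 0
  · simp [hi]
  · rw [← sq]
    exact mul_le_mul_of_nonneg_right (h i hi) (sq_nonneg _)

lemma eigenvectorBasis_dotProduct_eq_zero {v : ι → ℝ} {μ : ℝ} (hv : A *ᵥ v = μ • v) {i : ι}
    (hi : hA.eigenvalues i ≠ μ) : ⇑(hA.eigenvectorBasis i) ⬝ᵥ v = 0 := by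
  have h := hA.eigenvectorBasis_dotProduct_mulVec i v
  rw [hv, dotProduct_smul, smul_eq_mul] at h
  exact (mul_eq_mul_right_iff.mp h).resolve_left (Ne.symm hi)

lemma eigenvectorBasis_dotProduct_self (i : ι) :
    ⇑(hA.eigenvectorBasis i) ⬝ᵥ ⇑(hA.eigenvectorBasis i) = 1 := by
  rw [dotProduct_eq_inner_toLp, WithLp.toLp_ofLp, real_inner_self_eq_norm_sq,
    hA.eigenvectorBasis.orthonormal.1 i, one_pow]

end Matrix.IsHermitian

section EigDesc

variable {n : ℕ} {M : Matrix (Fin n) (Fin n) ℝ} (hM : M.IsHermitian)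

lemma eigDesc_apply (k : Fin n) :
    eigDesc hM k = hM.eigenvalues (Tuple.sort (fun j ↦ -hM.eigenvalues j) k) := by
  simp [eigDesc]

lemma eigenvalues_eq_eigDesc_symm_sort (i : Fin n) :
    hM.eigenvalues i = eigDesc hM ((Tuple.sort fun j ↦ -hM.eigenvalues j).symm i) := by
  rw [eigDesc_apply, Equiv.apply_symm_apply]

lemma eigDesc_antitone : Antitone (eigDesc hM) := fun _ _ hij ↦
  neg_le_neg (Tuple.monotone_sort _ hij)

lemma eigenvalues_le_eigDesc_zero (h0 : 0 < n) (i : Fin n) :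
    hM.eigenvalues i ≤ eigDesc hM ⟨0, h0⟩ := by
  rw [eigenvalues_eq_eigDesc_symm_sort hM i]
  exact eigDesc_antitone hM (Nat.zero_le _)

lemma eigenvalues_le_eigDesc_one (h1 : 1 < n) {i : Fin n}
    (hi : i ≠ Tuple.sort (fun j ↦ -hM.eigenvalues j) ⟨0, by omega⟩) :
    hM.eigenvalues i ≤ eigDesc hM ⟨1, h1⟩ := by
  rw [eigenvalues_eq_eigDesc_symm_sort hM i]
  refine eigDesc_antitone hM (Fin.le_def.mpr (Nat.one_le_iff_ne_zero.mpr fun h ↦ hi ?_))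
  rw [← Fin.ext (b := ⟨0, by omega⟩) h, Equiv.apply_symm_apply]

lemma exists_eigenvector_eigDesc (k : Fin n) :
    ∃ u : Fin n → ℝ, u ⬝ᵥ u = 1 ∧ M *ᵥ u = eigDesc hM k • u :=
  ⟨_, hM.eigenvectorBasis_dotProduct_self _, by rw [hM.mulVec_eigenvectorBasis, eigDesc_apply]⟩

lemma dotProduct_mulVec_le_eigDesc_zero (h0 : 0 < n) (x : Fin n → ℝ) :
    x ⬝ᵥ M *ᵥ x ≤ eigDesc hM ⟨0, h0⟩ * (x ⬝ᵥ x) :=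
  hM.dotProduct_mulVec_le_of_forall x fun i _ ↦ eigenvalues_le_eigDesc_zero hM h0 i

lemma dotProduct_mulVec_le_eigDesc_one (h1 : 1 < n) {v : Fin n → ℝ} (hv : v ⬝ᵥ v = 1)
    (hMv : M *ᵥ v = eigDesc hM ⟨0, by omega⟩ • v)
    (hgap : eigDesc hM ⟨1, h1⟩ < eigDesc hM ⟨0, by omega⟩) {x : Fin n → ℝ} (hvx : v ⬝ᵥ x = 0) :
    x ⬝ᵥ M *ᵥ x ≤ eigDesc hM ⟨1, h1⟩ * (x ⬝ᵥ x) := by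
  set j₀ := Tuple.sort (fun j ↦ -hM.eigenvalues j) ⟨0, by omega⟩
  set c := fun (i : Fin n) (y : Fin n → ℝ) ↦ ⇑(hM.eigenvectorBasis i) ⬝ᵥ y
  -- the strict gap makes the top eigenline the span of the `j₀`-th basis vector
  have hcv : ∀ i ≠ j₀, c i v = 0 := fun i hi ↦ hM.eigenvectorBasis_dotProduct_eq_zero hMv
    ((eigenvalues_le_eigDesc_one hM h1 hi).trans_lt hgap).ne
  have hsum : ∀ y, v ⬝ᵥ y = c j₀ v * c j₀ y := fun y ↦ by
    rw [hM.dotProduct_eq_sum_eigenvectorBasis]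
    exact Finset.sum_eq_single j₀ (fun i _ hi ↦ by simp [c, hcv i hi]) (by simp)
  have hcx : c j₀ x = 0 := by
    have hcv₀ : c j₀ v ≠ 0 := fun h ↦ by simpa [h] using (hsum v).symm.trans hv
    exact (mul_eq_zero.mp ((hsum x).symm.trans hvx)).resolve_left hcv₀
  refine hM.dotProduct_mulVec_le_of_forall x fun i hi ↦ eigenvalues_le_eigDesc_one hM h1 ?_
  rintro rfl
  exact hi hcx

end EigDesc

lemma abs_dotProduct_mulVec_le_opNorm {n : ℕ} (H : Matrix (Fin n) (Fin n) ℝ) (x : Fin n → ℝ) :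
    |x ⬝ᵥ H *ᵥ x| ≤ opNorm H * (x ⬝ᵥ x) := by
  set T := (Matrix.toEuclideanLin H).toContinuousLinearMap
  have hT : T (WithLp.toLp 2 x) = WithLp.toLp 2 (H *ᵥ x) := rfl
  rw [dotProduct_eq_inner_toLp, dotProduct_eq_inner_toLp, ← hT, real_inner_self_eq_norm_sq]
  calc |inner ℝ (WithLp.toLp 2 x) (T (WithLp.toLp 2 x))|
      ≤ ‖WithLp.toLp 2 x‖ * ‖T (WithLp.toLp 2 x)‖ := abs_real_inner_le_norm _ _
    _ ≤ ‖WithLp.toLp 2 x‖ * (‖T‖ * ‖WithLp.toLp 2 x‖) := by gcongr; exact T.le_opNorm _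
    _ = opNorm H * ‖WithLp.toLp 2 x‖ ^ 2 := by rw [opNorm]; ring

lemma eigDesc_zero_add_le {n : ℕ} {M H : Matrix (Fin n) (Fin n) ℝ} (hM : M.IsHermitian)
    (hH : H.IsHermitian) (h0 : 0 < n) :
    eigDesc (hM.add hH) ⟨0, h0⟩ ≤ eigDesc hM ⟨0, h0⟩ + opNorm H := by
  obtain ⟨u, hu, hMHu⟩ := exists_eigenvector_eigDesc (hM.add hH) ⟨0, h0⟩
  have hM_le := dotProduct_mulVec_le_eigDesc_zero hM h0 u
  have hH_le := (le_abs_self _).trans (abs_dotProduct_mulVec_le_opNorm H u)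
  rw [hu] at hM_le hH_le
  calc eigDesc (hM.add hH) ⟨0, h0⟩ = u ⬝ᵥ (M + H) *ᵥ u := by
        rw [hMHu, dotProduct_smul, hu, smul_eq_mul, mul_one]
    _ ≤ eigDesc hM ⟨0, h0⟩ + opNorm H := by
        rw [add_mulVec, dotProduct_add]; linarith

-- `ρ` is the shift `μ - (λ₁ + s)` of the top eigenvalue `μ` of `M + H`, whose unit eigenvector
-- is `α v + w` with `w ⟂ v` and `t = ‖w‖²`; `r = ⟪w, H v⟫`, `s = ⟪v, H v⟫` and `b = ‖H v‖²`.
lemma shift_mul_gap_le {δ η s b ρ α t r : ℝ} (hgap : 2 * η ≤ δ) (hb : 0 ≤ b)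
    (hρ : 0 ≤ ρ) (ht : 0 ≤ t) (hαt : α ^ 2 + t = 1) (hr : ρ * α = r)
    (hcompl : (δ + s + ρ - η) * t ≤ α * r) (hcs : r ^ 2 ≤ t * (b - s ^ 2)) :
    ρ * δ ≤ 2 * b := by
  rcases ht.eq_or_lt with rfl | htpos
  · have hα : α ^ 2 = 1 := by linarith
    have hρ0 : ρ = 0 := by
      have : (ρ * α) ^ 2 ≤ 0 := by rw [hr]; linarith
      rw [mul_pow, hα, mul_one] at this
      exact pow_eq_zero_iff two_ne_zero |>.mp (le_antisymm this (sq_nonneg ρ))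
    rw [hρ0, zero_mul]
    positivity
  · have hcompl' : ρ * (δ + s + ρ - η) ≤ b - s ^ 2 := by
      refine le_of_mul_le_mul_right ?_ htpos
      calc ρ * (δ + s + ρ - η) * t ≤ ρ * (α * r) := by
            rw [mul_assoc]; exact mul_le_mul_of_nonneg_left hcompl hρ
        _ = r ^ 2 := by rw [← hr]; ring
        _ ≤ (b - s ^ 2) * t := by linarith
    nlinarith [sq_nonneg (ρ + s), sq_nonneg s, mul_nonneg hρ (by linarith : 0 ≤ δ - 2 * η)]

lemma top_eigenvalue_shift_mul_gap_le {ι : Type*} [Fintype ι] {M H : Matrix ι ι ℝ}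
    (hM : M.IsHermitian) (hH : H.IsHermitian) {v u : ι → ℝ} {l₁ l₂ η μ : ℝ}
    (hv : v ⬝ᵥ v = 1) (hMv : M *ᵥ v = l₁ • v)
    (hM_compl : ∀ x, v ⬝ᵥ x = 0 → x ⬝ᵥ M *ᵥ x ≤ l₂ * (x ⬝ᵥ x))
    (hH_le : ∀ x, x ⬝ᵥ H *ᵥ x ≤ η * (x ⬝ᵥ x)) (hgap : 2 * η ≤ l₁ - l₂)
    (hu : u ⬝ᵥ u = 1) (hMHu : (M + H) *ᵥ u = μ • u) (hμ : v ⬝ᵥ (M + H) *ᵥ v ≤ μ) :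
    (μ - (l₁ + v ⬝ᵥ H *ᵥ v)) * (l₁ - l₂) ≤ 2 * (H *ᵥ v ⬝ᵥ H *ᵥ v) := by
  set s := v ⬝ᵥ H *ᵥ v
  set α := v ⬝ᵥ u
  set w := u - α • v
  set r := w ⬝ᵥ H *ᵥ v
  have hvw : v ⬝ᵥ w = 0 := by simp [w, α, dotProduct_sub, hv]
  have hwv : w ⬝ᵥ v = 0 := by rw [dotProduct_comm, hvw]
  have hu_eq : u = α • v + w := by simp [w]
  have hwu : w ⬝ᵥ u = w ⬝ᵥ w := by simp [hu_eq, dotProduct_add, hwv]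
  have hαt : α ^ 2 + w ⬝ᵥ w = 1 := by
    rw [← hu, hu_eq]
    simp only [dotProduct_add, add_dotProduct, dotProduct_smul, smul_dotProduct, hv, hvw, hwv,
      smul_eq_mul]
    ring
  have hvMHv : v ⬝ᵥ (M + H) *ᵥ v = l₁ + s := by
    rw [add_mulVec, dotProduct_add, hMv, dotProduct_smul, hv, smul_eq_mul, mul_one]
  have hr : (μ - (l₁ + s)) * α = r := by
    have key : μ * α = l₁ * α + (s * α + r) := calc
      μ * α = v ⬝ᵥ (M + H) *ᵥ u := by rw [hMHu, dotProduct_smul, smul_eq_mul]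
      _ = M *ᵥ v ⬝ᵥ u + H *ᵥ v ⬝ᵥ (α • v + w) := by
        rw [add_mulVec, dotProduct_add, hM.dotProduct_mulVec_comm, hH.dotProduct_mulVec_comm,
          ← hu_eq]
      _ = l₁ * α + (s * α + r) := by
        rw [hMv, smul_dotProduct, dotProduct_add, dotProduct_smul, dotProduct_comm (H *ᵥ v),
          dotProduct_comm (H *ᵥ v), smul_eq_mul, smul_eq_mul, mul_comm α]
    linear_combination key
  have hcompl : (l₁ - l₂ + s + (μ - (l₁ + s)) - η) * (w ⬝ᵥ w) ≤ α * r := by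
    have key : μ * (w ⬝ᵥ w) = α * (l₁ * (w ⬝ᵥ v)) + w ⬝ᵥ M *ᵥ w + (α * r + w ⬝ᵥ H *ᵥ w) := calc
      μ * (w ⬝ᵥ w) = w ⬝ᵥ (M + H) *ᵥ u := by rw [hMHu, dotProduct_smul, smul_eq_mul, hwu]
      _ = _ := by
        rw [hu_eq, add_mulVec, dotProduct_add, mulVec_add, mulVec_add, mulVec_smul, mulVec_smul,
          hMv, dotProduct_add, dotProduct_add, dotProduct_smul, dotProduct_smul, dotProduct_smul,
          smul_eq_mul, smul_eq_mul, smul_eq_mul]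
    rw [hwv, mul_zero, mul_zero, zero_add] at key
    linarith [hM_compl w hvw, hH_le w]
  exact shift_mul_gap_le hgap (dotProduct_star_self_nonneg _) (by linarith)
    (dotProduct_star_self_nonneg _) hαt hr hcompl (sq_dotProduct_le_of_dotProduct_eq_zero hv hvw _)

/-- Eigenvalue perturbation bound for the top eigenvalue (specialized form):
if `λ₁(M) − λ₂(M) ≥ 2‖H‖_op` and `v` is a unit top eigenvector of `M`, then
`λ₁(M+H) ≤ λ₁(M) + vᵀHv + 2‖Hv‖₂²/(λ₁(M) − λ₂(M))`. -/
theorem top_eigenvalue_perturbation_bound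
    {n : ℕ} (hn : 2 ≤ n)
    (M H : Matrix (Fin n) (Fin n) ℝ)
    (hM : M.IsHermitian) (hH : H.IsHermitian)
    (v : Fin n → ℝ) (hv : v ⬝ᵥ v = 1)
    (hveig : M.mulVec v = eigDesc hM ⟨0, by omega⟩ • v)
    (hgap : 2 * opNorm H ≤ eigDesc hM ⟨0, by omega⟩ - eigDesc hM ⟨1, by omega⟩) :
    eigDesc (hM.add hH) ⟨0, by omega⟩ ≤
      eigDesc hM ⟨0, by omega⟩ + v ⬝ᵥ H.mulVec v +
        2 * (H.mulVec v ⬝ᵥ H.mulVec v) /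
          (eigDesc hM ⟨0, by omega⟩ - eigDesc hM ⟨1, by omega⟩) := by
  have h0 : 0 < n := by omega
  have hs : -opNorm H ≤ v ⬝ᵥ H *ᵥ v :=
    neg_le_of_abs_le (by simpa [hv] using abs_dotProduct_mulVec_le_opNorm H v)
  have hl₂_le : eigDesc hM ⟨1, hn⟩ ≤ eigDesc hM ⟨0, h0⟩ := eigDesc_antitone hM (Nat.zero_le 1)
  rcases (sub_nonneg.mpr hl₂_le).eq_or_lt with hδ | hδ
  · rw [← hδ, div_zero, add_zero]
    linarith [eigDesc_zero_add_le hM hH h0]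
  · obtain ⟨u, hu, hMHu⟩ := exists_eigenvector_eigDesc (hM.add hH) ⟨0, h0⟩
    rw [← sub_le_iff_le_add', le_div_iff₀ hδ]
    refine top_eigenvalue_shift_mul_gap_le hM hH hv hveig
      (fun x ↦ dotProduct_mulVec_le_eigDesc_one hM hn hv hveig (by linarith))
      (fun x ↦ (le_abs_self _).trans (abs_dotProduct_mulVec_le_opNorm H x)) hgap hu hMHu ?_
    simpa [hv] using dotProduct_mulVec_le_eigDesc_zero (hM.add hH) h0 v
end

section
/- Let M be a real symmetric n×n matrix, λ ∈ ℝ, and let F_n = {Y ∈ ℝ^{n×n} : Y is symmetric positive semidefinite and 0 ≤ Y_{ij} ≤ 1 for all i, j}. A matrix Ŷ ∈ F_n maximizes ⟨Y, M⟩ − λ·tr(Y) over Y ∈ F_n if and only if there exist matrices U, L ∈ ℝ^{n×n} with all entries nonnegative such that: L_{ij} Ŷ_{ij} = 0 and U_{ij}(Ŷ_{ij} − 1) = 0 for all i, j; the matrix M − λI − U + L is negative semidefinite; and (M − λI − U + L) Ŷ = 0. -/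
/-!
Sufficiency is weak duality: for `Y ∈ F_n`, entrywise nonnegative `U, L` and PSD `S`,
`⟨Y, U - L - S⟩ ≤ Σ U`, with equality exactly under complementary slackness.
For necessity, put `A = M - λI` and `p = ⟨Ŷ, A⟩`; it suffices that `A = U - L - S` with `Σ U ≤ p`.
The set of such matrices is convex and closed (`Σ U ≤ p` bounds `U`, hence the diagonal of `S`,
hence `S` and `L`). If `A` were outside it, the symmetric part of a separating functional would
be entrywise nonnegative, PSD and bounded by `u / p`; normalised, it is a feasible point
beating `Ŷ`.
-/

open Matrix Metric

/-- The feasible set `F_n` of the recovery SDP. -/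
def FeasSDP {d : ℕ} (Y : Matrix (Fin d) (Fin d) ℝ) : Prop :=
  Y.PosSemidef ∧ ∀ i j, 0 ≤ Y i j ∧ Y i j ≤ 1

/-- The trace inner product `⟨X, Y⟩`. -/
noncomputable def mip {d : ℕ} (X Y : Matrix (Fin d) (Fin d) ℝ) : ℝ :=
  ∑ i, ∑ j, X i j * Y i j

attribute [local instance] Matrix.normedAddCommGroup Matrix.normedSpace

theorem isClosed_of_forall_isClosed_inter_closedBall {α : Type*} [PseudoMetricSpace α]
    {s : Set α} (h : ∀ x r, IsClosed (s ∩ closedBall x r)) : IsClosed s := by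
  refine isClosed_of_closure_subset fun x hx => ?_
  have hx' : x ∈ closure (s ∩ closedBall x 1) :=
    closure_mono (Set.inter_comm _ s ▸ Set.inter_subset_inter_left _ ball_subset_closedBall)
      (isOpen_ball.inter_closure ⟨mem_ball_self one_pos, hx⟩)
  exact ((h x 1).closure_eq ▸ hx').1

theorem isClosed_image_of_isBounded_inter_preimage {α β : Type*} [PseudoMetricSpace α]
    [ProperSpace α] [MetricSpace β] {D : Set α} {φ : α → β} (hD : IsClosed D)
    (hφ : Continuous φ) (hb : ∀ x r, Bornology.IsBounded (D ∩ φ ⁻¹' closedBall x r)) :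
    IsClosed (φ '' D) := by
  refine isClosed_of_forall_isClosed_inter_closedBall fun x r => ?_
  rw [← Set.image_inter_preimage]
  exact ((isCompact_of_isClosed_isBounded (hD.inter (isClosed_closedBall.preimage hφ))
    (hb x r)).image hφ).isClosed

theorem nonneg_of_forall_pos_neg_mul_lt {a u : ℝ} (h : ∀ t > 0, -(t * a) < u) : 0 ≤ a := by
  by_contra! ha
  have := h ((|u| + 1) / -a) (div_pos (by positivity) (neg_pos.mpr ha))
  rw [div_mul_eq_mul_div, div_neg, neg_neg, mul_div_assoc, div_self ha.ne, mul_one] at this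
  linarith [le_abs_self u]

theorem Fintype.sum_sum_eq_zero_iff_of_nonneg {ι κ M : Type*} [Fintype ι] [Fintype κ]
    [AddCommMonoid M] [PartialOrder M] [AddLeftMono M] {f : ι → κ → M}
    (hf : ∀ i j, 0 ≤ f i j) : ∑ i, ∑ j, f i j = 0 ↔ ∀ i j, f i j = 0 := by
  rw [← Fintype.sum_prod_type',
    Fintype.sum_eq_zero_iff_of_nonneg (f := fun p : ι × κ => f p.1 p.2) fun p => hf p.1 p.2]
  simp [funext_iff, Prod.forall]

namespace Matrix

variable {n : Type*} [Fintype n]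

theorem trace_mul_vecMulVec_self (S : Matrix n n ℝ) (v : n → ℝ) :
    trace (S * vecMulVec v v) = v ⬝ᵥ S *ᵥ v := by
  rw [mul_vecMulVec, trace_vecMulVec, dotProduct_comm]

theorem PosSemidef.trace_mul_nonneg {S Y : Matrix n n ℝ} (hS : S.PosSemidef)
    (hY : Y.PosSemidef) : 0 ≤ trace (S * Y) := by
  obtain ⟨m, v, rfl⟩ := posSemidef_iff_eq_sum_vecMulVec.mp hY
  simp only [star_trivial, Matrix.mul_sum, trace_sum, trace_mul_vecMulVec_self]
  exact Finset.sum_nonneg fun i _ => by simpa using hS.dotProduct_mulVec_nonneg (v i)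

theorem PosSemidef.mul_eq_zero_of_trace_mul_eq_zero {S Y : Matrix n n ℝ} (hS : S.PosSemidef)
    (hY : Y.PosSemidef) (h : trace (S * Y) = 0) : S * Y = 0 := by
  obtain ⟨m, v, rfl⟩ := posSemidef_iff_eq_sum_vecMulVec.mp hY
  simp only [star_trivial, Matrix.mul_sum, trace_sum, trace_mul_vecMulVec_self] at h ⊢
  rw [Finset.sum_eq_zero_iff_of_nonneg fun i _ => by
    simpa using hS.dotProduct_mulVec_nonneg (v i)] at h
  refine Finset.sum_eq_zero fun i hi => ?_
  have hSv : S *ᵥ v i = 0 := (hS.dotProduct_mulVec_zero_iff (v i)).mp (by simpa using h i hi)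
  rw [mul_vecMulVec, hSv, zero_vecMulVec]

theorem PosSemidef.abs_apply_le {S : Matrix n n ℝ} (hS : S.PosSemidef) (i j : n) :
    |S i j| ≤ (S i i + S j j) / 2 := by
  classical
  have hsymm : S j i = S i j := (isHermitian_iff_isSymm.mp hS.1).apply i j
  have quad (c : ℝ) : 0 ≤ S i i + c * (S i j + S j i) + c ^ 2 * S j j := by
    let x : n → ℝ := Pi.single i 1 + c • Pi.single j 1
    have expand : x ⬝ᵥ S *ᵥ x = S i i + c * (S i j + S j i) + c ^ 2 * S j j := by
      simp [x, mulVec_add, add_dotProduct, dotProduct_add, mulVec_smul]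
      ring
    rw [← expand]
    simpa using hS.dotProduct_mulVec_nonneg x
  rw [abs_le]
  constructor <;> linarith [quad 1, quad (-1)]

theorem isClosed_setOf_posSemidef : IsClosed {S : Matrix n n ℝ | S.PosSemidef} := by
  simp only [posSemidef_iff_dotProduct_mulVec, Set.ofPred_and, Set.ofPred_forall]
  refine (isClosed_eq continuous_id.matrix_conjTranspose continuous_id).inter
    (isClosed_iInter fun x => isClosed_le continuous_const ?_)
  fun_prop

end Matrix

section DualSublevelSet

variable {n : Type*} [Fintype n]

def dualFeasibleSet (p : ℝ) : Set (Matrix n n ℝ × Matrix n n ℝ × Matrix n n ℝ) :=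
  {T | (∀ i j, 0 ≤ T.1 i j) ∧ (∀ i j, 0 ≤ T.2.1 i j) ∧ T.2.2.PosSemidef ∧ ∑ i, ∑ j, T.1 i j ≤ p}

/-- `A ∈ dualSublevelSet p` iff the dual of `max ⟨Y, A⟩` over `F_n`, namely `min Σ U` subject to
`A = U - L - S`, `U, L ≥ 0` entrywise, `S` PSD, has a feasible point of value at most `p`. -/
def dualSublevelSet (p : ℝ) : Set (Matrix n n ℝ) :=
  (fun T => T.1 - T.2.1 - T.2.2) '' dualFeasibleSet p

theorem convex_dualFeasibleSet (p : ℝ) : Convex ℝ (dualFeasibleSet (n := n) p) := by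
  rintro T ⟨hU, hL, hS, hsum⟩ T' ⟨hU', hL', hS', hsum'⟩ a b ha hb hab
  refine ⟨fun i j => ?_, fun i j => ?_, (hS.smul ha).add (hS'.smul hb), ?_⟩
  · simpa using add_nonneg (mul_nonneg ha (hU i j)) (mul_nonneg hb (hU' i j))
  · simpa using add_nonneg (mul_nonneg ha (hL i j)) (mul_nonneg hb (hL' i j))
  · simp only [Prod.smul_fst, Prod.fst_add, Matrix.add_apply, Matrix.smul_apply, smul_eq_mul,
      Finset.sum_add_distrib, ← Finset.mul_sum]
    calc _ ≤ a * p + b * p := by gcongr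
      _ = p := by rw [← add_mul, hab, one_mul]

theorem convex_dualSublevelSet (p : ℝ) : Convex ℝ (dualSublevelSet (n := n) p) :=
  (convex_dualFeasibleSet p).is_linear_image
    ⟨fun _ _ => by simp only [Prod.fst_add, Prod.snd_add]; abel,
      fun _ _ => by simp only [Prod.smul_fst, Prod.smul_snd, smul_sub]⟩

theorem isClosed_dualFeasibleSet (p : ℝ) : IsClosed (dualFeasibleSet (n := n) p) := by
  simp only [dualFeasibleSet, Set.ofPred_and, Set.ofPred_forall]
  refine (isClosed_iInter fun i => isClosed_iInter fun j => isClosed_le continuous_const ?_).inter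
    ((isClosed_iInter fun i => isClosed_iInter fun j => isClosed_le continuous_const ?_).inter
    ((isClosed_setOf_posSemidef.preimage ?_).inter (isClosed_le ?_ continuous_const))) <;> fun_prop

theorem norm_le_of_mem_dualFeasibleSet {p R : ℝ} {T : Matrix n n ℝ × Matrix n n ℝ × Matrix n n ℝ}
    (hT : T ∈ dualFeasibleSet p) (hR : ‖T.1 - T.2.1 - T.2.2‖ ≤ R) : ‖T‖ ≤ 2 * (|p| + R) := by
  obtain ⟨U, L, S⟩ := T
  obtain ⟨hU, hL, hS, hsum⟩ := hT
  have hR0 : 0 ≤ R := (norm_nonneg _).trans hR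
  have hX (i j : n) : |U i j - L i j - S i j| ≤ R :=
    (norm_entry_le_entrywise_sup_norm (U - L - S)).trans hR
  have hUle (i j : n) : U i j ≤ |p| :=
    calc U i j ≤ ∑ j', U i j' := Finset.single_le_sum (fun j' _ => hU i j') (Finset.mem_univ j)
      _ ≤ ∑ i', ∑ j', U i' j' := Finset.single_le_sum
          (fun i' _ => Finset.sum_nonneg fun j' _ => hU i' j') (Finset.mem_univ i)
      _ ≤ |p| := hsum.trans (le_abs_self p)
  have hSdiag (i : n) : S i i ≤ |p| + R := by
    linarith [hL i i, hUle i i, (abs_le.mp (hX i i)).1]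
  have hS' (i j : n) : |S i j| ≤ |p| + R :=
    (hS.abs_apply_le i j).trans (by linarith [hSdiag i, hSdiag j])
  have hbound : 0 ≤ 2 * (|p| + R) := by positivity
  refine norm_prod_le_iff.mpr ⟨?_, norm_prod_le_iff.mpr ⟨?_, ?_⟩⟩ <;>
    refine (norm_le_iff hbound).mpr fun i j => ?_ <;> rw [Real.norm_eq_abs, abs_le] <;>
    constructor <;>
    linarith [hU i j, hL i j, hUle i j, abs_le.mp (hX i j), abs_le.mp (hS' i j), abs_nonneg p]

theorem isClosed_dualSublevelSet (p : ℝ) : IsClosed (dualSublevelSet (n := n) p) := by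
  refine isClosed_image_of_isBounded_inter_preimage (isClosed_dualFeasibleSet p) (by fun_prop)
    fun X r => isBounded_closedBall (x := 0) (r := 2 * (|p| + (‖X‖ + r))) |>.subset ?_
  rintro T ⟨hT, hTX⟩
  exact mem_closedBall_zero_iff.mpr
    (norm_le_of_mem_dualFeasibleSet hT (norm_le_of_mem_closedBall hTX))

theorem transpose_mem_dualSublevelSet {p : ℝ} {X : Matrix n n ℝ} (hX : X ∈ dualSublevelSet p) :
    Xᵀ ∈ dualSublevelSet p := by
  obtain ⟨⟨U, L, S⟩, ⟨hU, hL, hS, hsum⟩, rfl⟩ := hX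
  exact ⟨(Uᵀ, Lᵀ, Sᵀ), ⟨fun i j => hU j i, fun i j => hL j i, hS.transpose,
    by simpa only [transpose_apply, Finset.sum_comm (γ := n)] using hsum⟩, by simp⟩

theorem neg_add_mem_dualSublevelSet {p : ℝ} (hp : 0 ≤ p)
    {L S : Matrix n n ℝ} (hL : ∀ i j, 0 ≤ L i j) (hS : S.PosSemidef) :
    -(L + S) ∈ dualSublevelSet p :=
  ⟨(0, L, S), ⟨fun _ _ => le_rfl, hL, hS, by simpa using hp⟩, by simp only [zero_sub, neg_add']⟩

theorem single_mem_dualSublevelSet [DecidableEq n] {p : ℝ} (hp : 0 ≤ p)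
    (i j : n) : single i j p ∈ dualSublevelSet p :=
  ⟨(single i j p, 0, 0), ⟨fun a b => by dsimp only; rw [single_apply]; split_ifs <;> simp [hp],
    fun _ _ => le_rfl, PosSemidef.zero, by simp [single_apply, ite_and]⟩, by simp⟩

end DualSublevelSet

section TraceInnerProduct

variable {d : ℕ}

theorem mip_eq_trace_mul_transpose (X Y : Matrix (Fin d) (Fin d) ℝ) :
    mip X Y = trace (X * Yᵀ) := rfl

theorem mip_transpose_left (X Y : Matrix (Fin d) (Fin d) ℝ) : mip Xᵀ Y = mip X Yᵀ := by
  simp only [mip, transpose_apply]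
  exact Finset.sum_comm

theorem mip_add_left (X X' Y : Matrix (Fin d) (Fin d) ℝ) : mip (X + X') Y = mip X Y + mip X' Y := by
  simp only [mip, Matrix.add_apply, add_mul, Finset.sum_add_distrib]

theorem mip_smul_left (c : ℝ) (X Y : Matrix (Fin d) (Fin d) ℝ) : mip (c • X) Y = c * mip X Y := by
  simp only [mip, Matrix.smul_apply, smul_eq_mul, Finset.mul_sum, mul_assoc]

theorem mip_sub_right (X Y Y' : Matrix (Fin d) (Fin d) ℝ) :
    mip X (Y - Y') = mip X Y - mip X Y' := by
  simp only [mip, Matrix.sub_apply, mul_sub, Finset.sum_sub_distrib]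

theorem mip_neg_right (X Y : Matrix (Fin d) (Fin d) ℝ) : mip X (-Y) = -mip X Y := by
  simp only [mip, Matrix.neg_apply, mul_neg, Finset.sum_neg_distrib]

theorem mip_smul_right (c : ℝ) (X Y : Matrix (Fin d) (Fin d) ℝ) : mip X (c • Y) = c * mip X Y := by
  simp only [mip, Matrix.smul_apply, smul_eq_mul, Finset.mul_sum, mul_left_comm c]

theorem mip_zero_left (Y : Matrix (Fin d) (Fin d) ℝ) : mip 0 Y = 0 := by
  simp [mip]

theorem mip_single_right (X : Matrix (Fin d) (Fin d) ℝ) (i j : Fin d) (c : ℝ) :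
    mip X (single i j c) = X i j * c := by
  simp [mip, single_apply, ite_and]

theorem mip_vecMulVec_self (X : Matrix (Fin d) (Fin d) ℝ) (x : Fin d → ℝ) :
    mip X (vecMulVec x x) = x ⬝ᵥ X *ᵥ x := by
  simp only [mip, vecMulVec_apply, dotProduct, mulVec, Finset.mul_sum]
  exact Finset.sum_congr rfl fun i _ => Finset.sum_congr rfl fun j _ => by ring

theorem mip_one_right (Y : Matrix (Fin d) (Fin d) ℝ) : mip Y 1 = trace Y := by
  simp [mip, Matrix.one_apply, trace]

theorem mip_sub_smul_one (Y M : Matrix (Fin d) (Fin d) ℝ) (lam : ℝ) :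
    mip Y M - lam * Y.trace = mip Y (M - lam • (1 : Matrix (Fin d) (Fin d) ℝ)) := by
  rw [mip_sub_right, mip_smul_right, mip_one_right]

theorem Matrix.PosSemidef.mip_eq_trace_mul {S : Matrix (Fin d) (Fin d) ℝ} (hS : S.PosSemidef)
    (Y : Matrix (Fin d) (Fin d) ℝ) : mip Y S = trace (S * Y) := by
  rw [mip_eq_trace_mul_transpose, (isHermitian_iff_isSymm.mp hS.1).eq, trace_mul_comm]

theorem LinearMap.eq_mip (f : Matrix (Fin d) (Fin d) ℝ →ₗ[ℝ] ℝ) (X : Matrix (Fin d) (Fin d) ℝ) :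
    f X = mip (of fun i j => f (Matrix.single i j 1)) X := by
  conv_lhs => rw [matrix_eq_sum_single X]
  simp only [map_sum, mip, Matrix.of_apply]
  refine Finset.sum_congr rfl fun i _ => Finset.sum_congr rfl fun j _ => ?_
  rw [show Matrix.single i j (X i j) = X i j • Matrix.single i j 1 by simp, map_smul, smul_eq_mul,
    mul_comm]

end TraceInnerProduct

section Separation

variable {d : ℕ}

theorem exists_isSymm_mip_separating {K : Set (Matrix (Fin d) (Fin d) ℝ)} (hconv : Convex ℝ K)
    (hclosed : IsClosed K) (htr : ∀ X ∈ K, Xᵀ ∈ K) {A : Matrix (Fin d) (Fin d) ℝ}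
    (hA : A.IsSymm) (hAK : A ∉ K) :
    ∃ W : Matrix (Fin d) (Fin d) ℝ, ∃ u : ℝ, W.IsSymm ∧ (∀ X ∈ K, mip W X < u) ∧ u < mip W A := by
  have : LocallyConvexSpace ℝ (Matrix (Fin d) (Fin d) ℝ) := NormedSpace.toLocallyConvexSpace
  obtain ⟨f, u, hfK, hfA⟩ := geometric_hahn_banach_closed_point hconv hclosed hAK
  set V : Matrix (Fin d) (Fin d) ℝ := of fun i j => f (Matrix.single i j 1)
  have hf (X : Matrix (Fin d) (Fin d) ℝ) : f X = mip V X := f.toLinearMap.eq_mip X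
  -- the symmetric part of `V` still separates, because `K` is closed under transposition
  have hsymm (X : Matrix (Fin d) (Fin d) ℝ) :
      mip ((1 / 2 : ℝ) • (V + Vᵀ)) X = (f X + f Xᵀ) / 2 := by
    rw [mip_smul_left, mip_add_left, mip_transpose_left, hf, hf]
    ring
  refine ⟨(1 / 2 : ℝ) • (V + Vᵀ), u, (isSymm_add_transpose_self V).smul _, fun X hX => ?_, ?_⟩
  · rw [hsymm]
    linarith [hfK X hX, hfK Xᵀ (htr X hX)]
  · rw [hsymm, hA.eq]
    linarith

variable {p u : ℝ} {W : Matrix (Fin d) (Fin d) ℝ}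

theorem pos_of_forall_mip_lt (hp : 0 ≤ p) (hsep : ∀ X ∈ dualSublevelSet p, mip W X < u) :
    0 < u := by
  simpa [mip] using
    hsep _ (neg_add_mem_dualSublevelSet hp (L := 0) (fun _ _ => le_rfl) PosSemidef.zero)

theorem nonneg_apply_of_forall_mip_lt (hp : 0 ≤ p)
    (hsep : ∀ X ∈ dualSublevelSet p, mip W X < u) (i j : Fin d) : 0 ≤ W i j :=
  nonneg_of_forall_pos_neg_mul_lt fun t ht => by
    simpa [mip_neg_right, mip_single_right, mul_comm] using
      hsep _ (neg_add_mem_dualSublevelSet hp (L := single i j t)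
        (fun a b => by by_cases h : i = a ∧ j = b <;> simp [h, ht.le])
        PosSemidef.zero)

theorem posSemidef_of_forall_mip_lt (hW : W.IsSymm) (hp : 0 ≤ p)
    (hsep : ∀ X ∈ dualSublevelSet p, mip W X < u) : W.PosSemidef := by
  refine PosSemidef.of_dotProduct_mulVec_nonneg (isHermitian_iff_isSymm.mpr hW) fun x => ?_
  simpa using nonneg_of_forall_pos_neg_mul_lt fun t ht => by
    simpa [mip_neg_right, mip_smul_right, mip_vecMulVec_self] using
      hsep _ (neg_add_mem_dualSublevelSet hp (L := 0) (fun _ _ => le_rfl)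
        ((posSemidef_vecMulVec_self_star x).smul ht.le))

theorem mul_apply_le_of_forall_mip_lt (hp : 0 ≤ p)
    (hsep : ∀ X ∈ dualSublevelSet p, mip W X < u) (i j : Fin d) : p * W i j ≤ u := by
  simpa [mip_single_right, mul_comm] using (hsep _ (single_mem_dualSublevelSet hp i j)).le

end Separation

section Duality

variable {d : ℕ}

theorem feasSDP_zero : FeasSDP (0 : Matrix (Fin d) (Fin d) ℝ) :=
  ⟨PosSemidef.zero, fun _ _ => by simp⟩

theorem feasSDP_inv_norm_smul {W : Matrix (Fin d) (Fin d) ℝ} (hW : W.PosSemidef)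
    (hWnn : ∀ i j, 0 ≤ W i j) : FeasSDP (‖W‖⁻¹ • W) := by
  refine ⟨hW.smul (inv_nonneg.mpr (norm_nonneg W)), fun i j => ⟨?_, ?_⟩⟩
  · exact mul_nonneg (inv_nonneg.mpr (norm_nonneg W)) (hWnn i j)
  · refine inv_mul_le_one_of_le₀ ?_ (norm_nonneg W)
    simpa [abs_of_nonneg (hWnn i j)] using norm_entry_le_entrywise_sup_norm W (i := i) (j := j)

theorem mem_dualSublevelSet_of_isMax {A Yhat : Matrix (Fin d) (Fin d) ℝ} (hA : A.IsSymm)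
    (hopt : ∀ Y, FeasSDP Y → mip Y A ≤ mip Yhat A) : A ∈ dualSublevelSet (mip Yhat A) := by
  set p := mip Yhat A
  have hp : 0 ≤ p := by simpa [mip_zero_left] using hopt 0 feasSDP_zero
  by_contra hAK
  obtain ⟨W, u, hWsymm, hsep, huA⟩ := exists_isSymm_mip_separating (convex_dualSublevelSet p)
    (isClosed_dualSublevelSet p) (fun _ => transpose_mem_dualSublevelSet) hA hAK
  have hu := pos_of_forall_mip_lt hp hsep
  have hWnn := nonneg_apply_of_forall_mip_lt hp hsep
  have hWpos : 0 < ‖W‖ := norm_pos_iff.mpr <| by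
    rintro rfl
    linarith [mip_zero_left A]
  have hpW : p * ‖W‖ ≤ u := by
    rw [← abs_of_nonneg hp, ← Real.norm_eq_abs, ← norm_smul]
    refine (norm_le_iff hu.le).mpr fun i j => ?_
    rw [Matrix.smul_apply, smul_eq_mul, Real.norm_eq_abs,
      abs_of_nonneg (mul_nonneg hp (hWnn i j))]
    exact mul_apply_le_of_forall_mip_lt hp hsep i j
  have hle := hopt _ (feasSDP_inv_norm_smul (posSemidef_of_forall_mip_lt hWsymm hp hsep) hWnn)
  rw [mip_smul_left] at hle
  have hlt : p < ‖W‖⁻¹ * mip W A := (lt_inv_mul_iff₀ hWpos).mpr (by linarith)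
  linarith

theorem sum_sub_mip_sub_sub (Y U L S : Matrix (Fin d) (Fin d) ℝ) :
    ∑ i, ∑ j, U i j - mip Y (U - L - S) =
      ∑ i, ∑ j, U i j * (1 - Y i j) + ∑ i, ∑ j, L i j * Y i j + mip Y S := by
  simp only [mip, Matrix.sub_apply, ← Finset.sum_add_distrib, ← Finset.sum_sub_distrib]
  exact Finset.sum_congr rfl fun i _ => Finset.sum_congr rfl fun j _ => by ring

variable {Y U L S : Matrix (Fin d) (Fin d) ℝ}

theorem mip_sub_sub_le_sum (hY : FeasSDP Y) (hU : ∀ i j, 0 ≤ U i j) (hL : ∀ i j, 0 ≤ L i j)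
    (hS : S.PosSemidef) : mip Y (U - L - S) ≤ ∑ i, ∑ j, U i j := by
  have hgap := sum_sub_mip_sub_sub Y U L S
  have h1 : 0 ≤ ∑ i, ∑ j, U i j * (1 - Y i j) := Finset.sum_nonneg fun i _ =>
    Finset.sum_nonneg fun j _ => mul_nonneg (hU i j) (sub_nonneg.mpr (hY.2 i j).2)
  have h2 : 0 ≤ ∑ i, ∑ j, L i j * Y i j := Finset.sum_nonneg fun i _ =>
    Finset.sum_nonneg fun j _ => mul_nonneg (hL i j) (hY.2 i j).1
  have h3 : 0 ≤ mip Y S := hS.mip_eq_trace_mul Y ▸ hS.trace_mul_nonneg hY.1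
  linarith

theorem mip_sub_sub_eq_sum_iff (hY : FeasSDP Y) (hU : ∀ i j, 0 ≤ U i j)
    (hL : ∀ i j, 0 ≤ L i j) (hS : S.PosSemidef) :
    mip Y (U - L - S) = ∑ i, ∑ j, U i j ↔
      (∀ i j, L i j * Y i j = 0) ∧ (∀ i j, U i j * (Y i j - 1) = 0) ∧ S * Y = 0 := by
  have h1 (i j : Fin d) : 0 ≤ U i j * (1 - Y i j) :=
    mul_nonneg (hU i j) (sub_nonneg.mpr (hY.2 i j).2)
  have h2 (i j : Fin d) : 0 ≤ L i j * Y i j := mul_nonneg (hL i j) (hY.2 i j).1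
  have h3 : 0 ≤ mip Y S := hS.mip_eq_trace_mul Y ▸ hS.trace_mul_nonneg hY.1
  have hSY : mip Y S = 0 ↔ S * Y = 0 := by
    rw [hS.mip_eq_trace_mul Y]
    exact ⟨hS.mul_eq_zero_of_trace_mul_eq_zero hY.1, fun h => by simp [h]⟩
  have hslack (i j : Fin d) : U i j * (1 - Y i j) = 0 ↔ U i j * (Y i j - 1) = 0 := by
    constructor <;> intro h <;> linarith
  have hsum : mip Y (U - L - S) = ∑ i, ∑ j, U i j ↔
      ∑ i, ∑ j, U i j * (1 - Y i j) + ∑ i, ∑ j, L i j * Y i j + mip Y S = 0 := by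
    rw [← sum_sub_mip_sub_sub]
    constructor <;> intro h <;> linarith
  have hs1 : 0 ≤ ∑ i, ∑ j, U i j * (1 - Y i j) :=
    Finset.sum_nonneg fun i _ => Finset.sum_nonneg fun j _ => h1 i j
  have hs2 : 0 ≤ ∑ i, ∑ j, L i j * Y i j :=
    Finset.sum_nonneg fun i _ => Finset.sum_nonneg fun j _ => h2 i j
  rw [hsum, add_eq_zero_iff_of_nonneg (add_nonneg hs1 hs2) h3, add_eq_zero_iff_of_nonneg hs1 hs2,
    Fintype.sum_sum_eq_zero_iff_of_nonneg h1, Fintype.sum_sum_eq_zero_iff_of_nonneg h2, hSY]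
  simp only [hslack]
  tauto

end Duality

/-- KKT conditions for the recovery SDP: `Ŷ ∈ F_n` maximizes `⟨Y, M⟩ − λ·tr(Y)` over `F_n`
iff there exist entrywise-nonnegative dual matrices `U, L` with complementary slackness,
`M − λI − U + L` negative semidefinite, and `(M − λI − U + L)·Ŷ = 0`. -/
theorem recovery_sdp_kkt
    {n : ℕ} (M : Matrix (Fin n) (Fin n) ℝ) (hM : M.IsHermitian) (lam : ℝ)
    (Yhat : Matrix (Fin n) (Fin n) ℝ) (hYhat : FeasSDP Yhat) :
    (∀ Y, FeasSDP Y → mip Y M - lam * Y.trace ≤ mip Yhat M - lam * Yhat.trace) ↔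
      ∃ U L : Matrix (Fin n) (Fin n) ℝ,
        (∀ i j, 0 ≤ U i j) ∧ (∀ i j, 0 ≤ L i j) ∧
        (∀ i j, L i j * Yhat i j = 0) ∧ (∀ i j, U i j * (Yhat i j - 1) = 0) ∧
        (-(M - lam • (1 : Matrix (Fin n) (Fin n) ℝ) - U + L)).PosSemidef ∧
        (M - lam • (1 : Matrix (Fin n) (Fin n) ℝ) - U + L) * Yhat = 0 := by
  simp only [mip_sub_smul_one]
  set A := M - lam • (1 : Matrix (Fin n) (Fin n) ℝ)
  constructor
  · intro hopt
    obtain ⟨⟨U, L, S⟩, ⟨hU, hL, hS, hsum⟩, hA⟩ :=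
      mem_dualSublevelSet_of_isMax ((isHermitian_iff_isSymm.mp hM).sub (isSymm_one.smul lam)) hopt
    have hA : A = U - L - S := hA.symm
    have hS_eq : -(A - U + L) = S := by rw [hA]; abel
    obtain ⟨hLY, hUY, hSY⟩ := (mip_sub_sub_eq_sum_iff hYhat hU hL hS).mp
      (le_antisymm (mip_sub_sub_le_sum hYhat hU hL hS) (hA ▸ hsum))
    refine ⟨U, L, hU, hL, hLY, hUY, hS_eq ▸ hS, ?_⟩
    rw [← neg_neg (A - U + L), hS_eq, Matrix.neg_mul, hSY, neg_zero]
  · rintro ⟨U, L, hU, hL, hLY, hUY, hS, hSY⟩ Y hY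
    set S := -(A - U + L) with hS_def
    have hA : A = U - L - S := by rw [hS_def]; abel
    have hSY' : S * Yhat = 0 := by rw [hS_def, Matrix.neg_mul, hSY, neg_zero]
    rw [hA]
    exact (mip_sub_sub_le_sum hY hU hL hS).trans_eq
      ((mip_sub_sub_eq_sum_iff hYhat hU hL hS).mpr ⟨hLY, hUY, hSY'⟩).symm
end

section
/- In the gap-recovery setup, for any Y ∈ F_n, writing D = Y − Ȳ, it holds that tr((I − QQᵀ)·Y·(I − QQᵀ)) ≤ tr(D) + (1/s̄)·‖J̄ ∘ D‖_1. (Here (I − QQᵀ)(Y − Ȳ)(I − QQᵀ) = (I − QQᵀ)Y(I − QQᵀ) is positive semidefinite, so its trace equals its nuclear norm.) -/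
open Matrix

/-- Entrywise ℓ¹ norm of a matrix. -/
noncomputable def l1Norm {n : ℕ} (X : Matrix (Fin n) (Fin n) ℝ) : ℝ :=
  ∑ i, ∑ j, |X i j|

/-- In the gap-recovery setup (clusters `c : Fin n → Fin K` with sizes `s`, vertices
ordered by cluster, and `r` the 0-based index of the smallest "big" cluster):
`QQᵀ = diag(J_{s_1}/s_1, …, J_{s_{r+1}}/s_{r+1}, 0, …, 0)`,
`Ȳ = diag(J_{s_1}, …, J_{s_{r+1}}, 0, …, 0)`, `J̄` is the indicator of pairs with at
least one vertex in a big cluster, and for any `Y ∈ F_n`, `D = Y − Ȳ`: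
`tr((I − QQᵀ)·Y·(I − QQᵀ)) ≤ tr(D) + (1/s̄)·‖J̄ ∘ D‖₁` where `s̄ = s r`. -/
theorem gap_recovery_trace_term_bound
    {n K : ℕ} (s : Fin K → ℕ) (hs : Antitone s) (hspos : ∀ k, 0 < s k)
    (c : Fin n → Fin K) (hc : Monotone c)
    (hcount : ∀ k, (Finset.univ.filter fun i => c i = k).card = s k)
    (r : Fin K)
    (P Yb Jbar : Matrix (Fin n) (Fin n) ℝ)
    (hP : P = Matrix.of fun i j =>
      if c i = c j ∧ c i ≤ r then (1 : ℝ) / (s (c i) : ℝ) else 0)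
    (hYb : Yb = Matrix.of fun i j => if c i = c j ∧ c i ≤ r then (1 : ℝ) else 0)
    (hJbar : Jbar = Matrix.of fun i j => if c i ≤ r ∨ c j ≤ r then (1 : ℝ) else 0)
    (Y : Matrix (Fin n) (Fin n) ℝ) (hY : FeasSDP Y) :
    ((1 - P) * Y * (1 - P)).trace ≤
      (Y - Yb).trace + (1 / (s r : ℝ)) * l1Norm (Matrix.hadamard Jbar (Y - Yb)) := by
  obtain ⟨hpsd, hent⟩ := hY
  have hsym : ∀ i j, Y j i = Y i j := by
    intro i j
    have := congrFun (congrFun hpsd.1 j) i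
    simpa [Matrix.conjTranspose_apply] using this.symm
  have hsk : ∀ k : Fin K, (0:ℝ) < (s k : ℝ) := fun k => by exact_mod_cast hspos k
  have hsr : (0:ℝ) < (s r : ℝ) := hsk r
  -- P is idempotent
  have hPP : P * P = P := by
    subst hP
    ext i j
    simp only [Matrix.mul_apply, Matrix.of_apply]
    by_cases h2 : c i = c j ∧ c i ≤ r
    · have hterm : ∀ k, (if c i = c k ∧ c i ≤ r then (1:ℝ)/(s (c i):ℝ) else 0) *
          (if c k = c j ∧ c k ≤ r then (1:ℝ)/(s (c k):ℝ) else 0) =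
          if c k = c i then (1/(s (c i):ℝ)) * (1/(s (c i):ℝ)) else 0 := by
        intro k
        by_cases h1 : c k = c i
        · simp [h1, h2.1.symm ▸ h1, h2.2, ← h2.1]
        · rw [if_neg (fun h => h1 h.1.symm), zero_mul, if_neg h1]
      rw [if_pos h2]
      calc (∑ k, (if c i = c k ∧ c i ≤ r then (1:ℝ)/(s (c i):ℝ) else 0) *
          (if c k = c j ∧ c k ≤ r then (1:ℝ)/(s (c k):ℝ) else 0))
          = ∑ k, if c k = c i then (1/(s (c i):ℝ)) * (1/(s (c i):ℝ)) else 0 :=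
            Finset.sum_congr rfl (fun k _ => hterm k)
        _ = (1:ℝ)/(s (c i):ℝ) := by
            rw [← Finset.sum_filter, Finset.sum_const, hcount, nsmul_eq_mul]
            have := (hsk (c i)).ne'
            field_simp
    · rw [if_neg h2]
      apply Finset.sum_eq_zero
      intro k _
      by_cases h1 : c i = c k ∧ c i ≤ r
      · rw [if_pos h1, if_neg (fun h => h2 ⟨h1.1.trans h.1, h1.2⟩), mul_zero]
      · rw [if_neg h1, zero_mul]
  -- trace identity
  have htr : ((1 - P) * Y * (1 - P)).trace = Y.trace - (P * Y).trace := by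
    have hexp : (1 - P) * Y * (1 - P) = Y - P*Y - Y*P + P*Y*P := by noncomm_ring
    rw [hexp, Matrix.trace_add, Matrix.trace_sub, Matrix.trace_sub,
        Matrix.trace_mul_comm Y P, Matrix.trace_mul_cycle, hPP]
    ring
  rw [htr, Matrix.trace_sub]
  -- it suffices to show Yb.trace - (P*Y).trace ≤ (1/s r) * l1Norm ...
  have hYbtr : Yb.trace = ∑ i, ∑ j,
      (if c i = c j ∧ c i ≤ r then (1:ℝ)/(s (c i):ℝ) else 0) := by
    subst hYb
    unfold Matrix.trace
    apply Finset.sum_congr rfl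
    intro i _
    simp only [Matrix.diag_apply, Matrix.of_apply, eq_self_iff_true, true_and]
    by_cases h : c i ≤ r
    · rw [if_pos h]
      have hterm : ∀ j, (if c i = c j ∧ c i ≤ r then (1:ℝ)/(s (c i):ℝ) else 0) =
          if c j = c i then (1:ℝ)/(s (c i):ℝ) else 0 := by
        intro j
        by_cases hj : c j = c i
        · rw [if_pos ⟨hj.symm, h⟩, if_pos hj]
        · rw [if_neg (fun hh => hj hh.1.symm), if_neg hj]
      rw [Finset.sum_congr rfl (fun j _ => hterm j),
          ← Finset.sum_filter, Finset.sum_const, hcount, nsmul_eq_mul]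
      have := (hsk (c i)).ne'
      field_simp
    · rw [if_neg h]
      symm
      apply Finset.sum_eq_zero
      intro j _
      exact if_neg (fun hh => h hh.2)
  have hPYtr : (P * Y).trace = ∑ i, ∑ j,
      (if c i = c j ∧ c i ≤ r then (1:ℝ)/(s (c i):ℝ) else 0) * Y j i := by
    subst hP
    unfold Matrix.trace
    apply Finset.sum_congr rfl
    intro i _
    simp only [Matrix.diag_apply, Matrix.mul_apply, Matrix.of_apply]
  have hkey : Yb.trace - (P*Y).trace ≤
      (1 / (s r : ℝ)) * l1Norm (Matrix.hadamard Jbar (Y - Yb)) := by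
    have hL : l1Norm (Matrix.hadamard Jbar (Y - Yb)) =
        ∑ i, ∑ j, |Jbar i j * (Y i j - Yb i j)| := by
      simp [l1Norm, Matrix.hadamard, Matrix.sub_apply]
    rw [hYbtr, hPYtr, hL, ← Finset.sum_sub_distrib, Finset.mul_sum]
    apply Finset.sum_le_sum
    intro i _
    rw [← Finset.sum_sub_distrib, Finset.mul_sum]
    apply Finset.sum_le_sum
    intro j _
    by_cases h2 : c i = c j ∧ c i ≤ r
    · rw [if_pos h2]
      have hJ : Jbar i j = 1 := by rw [hJbar]; exact if_pos (Or.inl h2.2)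
      have hYbij : Yb i j = 1 := by rw [hYb]; exact if_pos h2
      rw [hJ, hYbij, one_mul, hsym i j]
      have h01 := hent i j
      rw [abs_of_nonpos (by linarith)]
      have hss : (s r : ℝ) ≤ (s (c i) : ℝ) := by exact_mod_cast hs h2.2
      have h1 : (1:ℝ)/(s (c i):ℝ) ≤ 1/(s r:ℝ) := one_div_le_one_div_of_le hsr hss
      calc (1:ℝ)/(s (c i):ℝ) - (1:ℝ)/(s (c i):ℝ) * Y i j
          = (1:ℝ)/(s (c i):ℝ) * (1 - Y i j) := by ring
        _ ≤ (1:ℝ)/(s r:ℝ) * (1 - Y i j) :=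
            mul_le_mul_of_nonneg_right h1 (by linarith)
        _ = 1/(s r:ℝ) * -(Y i j - 1) := by ring
    · rw [if_neg h2, zero_sub, zero_mul, neg_zero]
      positivity
  linarith
end

section
/- In the gap-recovery setup, define the projections P∥(M) = QQᵀM + MQQᵀ − QQᵀMQQᵀ and P⊥(M) = (I − QQᵀ)M(I − QQᵀ). Then for any matrix W ∈ ℝ^{n×n} and any Y ∈ F_n: |⟨Ȳ − Y, W⟩| ≤ ‖P∥(W)‖_∞ · ‖J̄ ∘ (Y − Ȳ)‖_1 + ‖W‖_op · tr((I − QQᵀ)·Y·(I − QQᵀ)). (The last trace equals the nuclear norm of P⊥(Y − Ȳ) = (I − QQᵀ)Y(I − QQᵀ), which is positive semidefinite.) -/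
open Matrix

/-- Entrywise ℓ∞ norm (maximum absolute entry) of a matrix, via the sup norm
on the underlying function type. -/
noncomputable def linfNorm {n : ℕ} (X : Matrix (Fin n) (Fin n) ℝ) : ℝ :=
  ‖Matrix.of.symm X‖

/-!
Write `W = P∥(W) + (1 - P) W (1 - P)` with `P = QQᵀ`. Since `P Ȳ = Ȳ`, the second part pairs
with `Y - Ȳ` only through the positive semidefinite `Z = (1 - P) Y (1 - P)`, and writing
`Z = BᵀB` turns `⟨Z, W⟩` into a sum of quadratic forms `⟨b_k, W b_k⟩`, each at most
`‖W‖_op ‖b_k‖²`, whose total is `‖W‖_op tr Z`. The first part vanishes on the block where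
`J̄ = 0`, so an entrywise Hölder bound against `J̄ ∘ (Y - Ȳ)` controls it.
-/

section InnerProduct

variable {d : ℕ}

lemma mip_add_right (X A B : Matrix (Fin d) (Fin d) ℝ) :
    mip X (A + B) = mip X A + mip X B := by
  simp only [mip, Matrix.add_apply, mul_add, Finset.sum_add_distrib]

lemma mip_neg_left (X Y : Matrix (Fin d) (Fin d) ℝ) : mip (-X) Y = -mip X Y := by
  simp only [mip, Matrix.neg_apply, neg_mul, Finset.sum_neg_distrib]

lemma mip_eq_trace_transpose_mul (X Y : Matrix (Fin d) (Fin d) ℝ) :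
    mip X Y = (Xᵀ * Y).trace := by
  simp only [mip, trace, diag, mul_apply, transpose_apply]
  exact Finset.sum_comm

lemma mip_mul_mul_of_transpose_eq {Q : Matrix (Fin d) (Fin d) ℝ} (hQ : Qᵀ = Q)
    (A W : Matrix (Fin d) (Fin d) ℝ) : mip A (Q * W * Q) = mip (Q * A * Q) W := by
  rw [mip_eq_trace_transpose_mul, mip_eq_trace_transpose_mul, transpose_mul, transpose_mul, hQ,
    Matrix.mul_assoc Q (Aᵀ * Q) W, trace_mul_comm Q]
  simp only [Matrix.mul_assoc]

lemma abs_apply_le_linfNorm (X : Matrix (Fin d) (Fin d) ℝ) (i j : Fin d) :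
    |X i j| ≤ linfNorm X :=
  (norm_le_pi_norm (Matrix.of.symm X i) j).trans (norm_le_pi_norm (Matrix.of.symm X) i)

lemma abs_mip_le_linfNorm_mul_l1Norm_hadamard {J X M : Matrix (Fin d) (Fin d) ℝ}
    (hJ : ∀ i j, J i j = 1 ∨ M i j = 0) : |mip X M| ≤ linfNorm M * l1Norm (J ⊙ X) := by
  have hentry : ∀ i j, |X i j * M i j| ≤ linfNorm M * |(J ⊙ X) i j| := fun i j => by
    rcases hJ i j with hJij | hMij
    · rw [hadamard_apply, hJij, one_mul, abs_mul, mul_comm]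
      exact mul_le_mul_of_nonneg_right (abs_apply_le_linfNorm M i j) (abs_nonneg _)
    · rw [hMij, mul_zero, abs_zero]
      exact mul_nonneg ((abs_nonneg _).trans (abs_apply_le_linfNorm M i j)) (abs_nonneg _)
  calc |mip X M| ≤ ∑ i, ∑ j, |X i j * M i j| :=
        (Finset.abs_sum_le_sum_abs _ _).trans
          (Finset.sum_le_sum fun i _ => Finset.abs_sum_le_sum_abs _ _)
    _ ≤ ∑ i, ∑ j, linfNorm M * |(J ⊙ X) i j| :=
        Finset.sum_le_sum fun i _ => Finset.sum_le_sum fun j _ => hentry i j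
    _ = linfNorm M * l1Norm (J ⊙ X) := by simp only [l1Norm, Finset.mul_sum]

lemma abs_dotProduct_mulVec_le_opNorm_mul (W : Matrix (Fin d) (Fin d) ℝ) (v : Fin d → ℝ) :
    |v ⬝ᵥ W *ᵥ v| ≤ opNorm W * (v ⬝ᵥ v) := by
  set x : EuclideanSpace ℝ (Fin d) := WithLp.toLp 2 v
  set L := (toEuclideanLin W).toContinuousLinearMap
  have hinner : inner ℝ x (L x) = v ⬝ᵥ W *ᵥ v := by
    simp [x, L, EuclideanSpace.inner_eq_star_dotProduct, dotProduct_comm]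
  have hnorm : ‖x‖ ^ 2 = v ⬝ᵥ v := by
    rw [← real_inner_self_eq_norm_sq, EuclideanSpace.inner_eq_star_dotProduct, star_trivial]
  calc |v ⬝ᵥ W *ᵥ v| ≤ ‖x‖ * ‖L x‖ := hinner ▸ abs_real_inner_le_norm x (L x)
    _ ≤ ‖x‖ * (‖L‖ * ‖x‖) := mul_le_mul_of_nonneg_left (L.le_opNorm x) (norm_nonneg x)
    _ = opNorm W * (v ⬝ᵥ v) := by rw [opNorm, ← hnorm]; ring

lemma mip_transpose_mul_self (B W : Matrix (Fin d) (Fin d) ℝ) :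
    mip (Bᵀ * B) W = ∑ k, B k ⬝ᵥ W *ᵥ B k := by
  rw [mip_eq_trace_transpose_mul, transpose_mul, transpose_transpose, Matrix.mul_assoc,
    trace_mul_comm, Matrix.mul_assoc]
  simp only [trace, diag, mul_apply, transpose_apply, dotProduct, mulVec]

lemma trace_transpose_mul_self (B : Matrix (Fin d) (Fin d) ℝ) :
    (Bᵀ * B).trace = ∑ k, B k ⬝ᵥ B k := by
  simp only [trace, diag, mul_apply, transpose_apply, dotProduct]
  exact Finset.sum_comm

open scoped MatrixOrder in
lemma Matrix.PosSemidef.abs_mip_le_opNorm_mul_trace {Z : Matrix (Fin d) (Fin d) ℝ}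
    (hZ : Z.PosSemidef) (W : Matrix (Fin d) (Fin d) ℝ) : |mip Z W| ≤ opNorm W * Z.trace := by
  obtain ⟨B, rfl⟩ := CStarAlgebra.nonneg_iff_eq_star_mul_self.mp hZ.nonneg
  rw [star_eq_conjTranspose, conjTranspose_eq_transpose_of_trivial, mip_transpose_mul_self,
    trace_transpose_mul_self, Finset.mul_sum]
  exact (Finset.abs_sum_le_sum_abs _ _).trans
    (Finset.sum_le_sum fun k _ => abs_dotProduct_mulVec_le_opNorm_mul W (B k))

end InnerProduct

section Projection

variable {d : ℕ}

lemma mul_add_mul_sub_mul_mul_apply_eq_zero {P : Matrix (Fin d) (Fin d) ℝ} {i j : Fin d}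
    (hi : ∀ k, P i k = 0) (hj : ∀ k, P k j = 0) (W : Matrix (Fin d) (Fin d) ℝ) :
    (P * W + W * P - P * W * P) i j = 0 := by
  simp [mul_apply, hi, hj]

theorem abs_mip_sub_le_of_isSymm {P Yb J Y : Matrix (Fin d) (Fin d) ℝ} (hP : P.IsSymm)
    (hPYb : P * Yb = Yb) (hY : Y.PosSemidef) (W : Matrix (Fin d) (Fin d) ℝ)
    (hJ : ∀ i j, J i j = 1 ∨ (P * W + W * P - P * W * P) i j = 0) :
    |mip (Yb - Y) W| ≤ linfNorm (P * W + W * P - P * W * P) * l1Norm (J ⊙ (Y - Yb)) +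
      opNorm W * ((1 - P) * Y * (1 - P)).trace := by
  have hQ : (1 - P)ᵀ = 1 - P := by rw [transpose_sub, transpose_one, hP.eq]
  have hsplit : W = (P * W + W * P - P * W * P) + (1 - P) * W * (1 - P) := by noncomm_ring
  have hperp : mip (Y - Yb) ((1 - P) * W * (1 - P)) = mip ((1 - P) * Y * (1 - P)) W := by
    have hQYb : (1 - P) * Yb = 0 := by rw [Matrix.sub_mul, Matrix.one_mul, hPYb, sub_self]
    rw [mip_mul_mul_of_transpose_eq hQ, Matrix.mul_sub (1 - P) Y Yb, hQYb, sub_zero]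
  have hZ : ((1 - P) * Y * (1 - P)).PosSemidef := by
    have h := hY.conjTranspose_mul_mul_same (1 - P)
    rwa [conjTranspose_eq_transpose_of_trivial, hQ] at h
  calc |mip (Yb - Y) W|
      = |mip (Y - Yb) (P * W + W * P - P * W * P) + mip (Y - Yb) ((1 - P) * W * (1 - P))| := by
        rw [← mip_add_right, ← hsplit, ← neg_sub, mip_neg_left, abs_neg]
    _ ≤ _ := abs_add_le _ _
    _ ≤ _ := add_le_add (abs_mip_le_linfNorm_mul_l1Norm_hadamard hJ)
        (hperp ▸ hZ.abs_mip_le_opNorm_mul_trace W)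

end Projection

section Clusters

variable {n K : ℕ} (s : Fin K → ℕ) (c : Fin n → Fin K) (r : Fin K)

/-- The matrix `QQᵀ`; `clusterBlocks` below is `Ȳ`. -/
noncomputable def clusterProj : Matrix (Fin n) (Fin n) ℝ :=
  of fun i j => if c i = c j ∧ c i ≤ r then (1 : ℝ) / (s (c i) : ℝ) else 0

def clusterBlocks : Matrix (Fin n) (Fin n) ℝ :=
  of fun i j => if c i = c j ∧ c i ≤ r then (1 : ℝ) else 0

lemma clusterProj_isSymm : (clusterProj s c r).IsSymm := by
  ext i j
  simp only [clusterProj, transpose_apply, of_apply]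
  by_cases h : c i = c j
  · rw [h]
  · rw [if_neg (by tauto), if_neg (by tauto)]

lemma clusterProj_apply_of_lt {i : Fin n} (hi : r < c i) (j : Fin n) : clusterProj s c r i j = 0 :=
  if_neg fun h => hi.not_ge h.2

lemma clusterProj_apply_of_lt' {j : Fin n} (hj : r < c j) (i : Fin n) : clusterProj s c r i j = 0 :=
  if_neg fun h : c i = c j ∧ c i ≤ r => hj.not_ge (h.1 ▸ h.2)

variable {s c}

lemma clusterProj_mul_clusterBlocks
    (hcount : ∀ k, (Finset.univ.filter fun i => c i = k).card = s k) :
    clusterProj s c r * clusterBlocks c r = clusterBlocks c r := by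
  ext i j
  have hentry : ∀ k, clusterProj s c r i k * clusterBlocks c r k j =
      if c k = c i then clusterBlocks c r i j / s (c i) else 0 := fun k => by
    simp only [clusterProj, clusterBlocks, of_apply]
    split_ifs <;> grind
  have hs : (s (c i) : ℝ) ≠ 0 := by
    rw [← hcount]
    exact Nat.cast_ne_zero.mpr (Finset.card_ne_zero.mpr ⟨i, by simp⟩)
  rw [mul_apply, Finset.sum_congr rfl fun k _ => hentry k, ← Finset.sum_filter, Finset.sum_const,
    hcount, nsmul_eq_mul]
  field_simp

end Clusters

theorem gap_recovery_noise_term_bound_general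
    {n K : ℕ} (s : Fin K → ℕ)
    (c : Fin n → Fin K)
    (hcount : ∀ k, (Finset.univ.filter fun i => c i = k).card = s k)
    (r : Fin K)
    (P Yb Jbar : Matrix (Fin n) (Fin n) ℝ)
    (hP : P = Matrix.of fun i j =>
      if c i = c j ∧ c i ≤ r then (1 : ℝ) / (s (c i) : ℝ) else 0)
    (hYb : Yb = Matrix.of fun i j => if c i = c j ∧ c i ≤ r then (1 : ℝ) else 0)
    (hJbar : Jbar = Matrix.of fun i j => if c i ≤ r ∨ c j ≤ r then (1 : ℝ) else 0)
    (W : Matrix (Fin n) (Fin n) ℝ)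
    (Y : Matrix (Fin n) (Fin n) ℝ) (hY : FeasSDP Y) :
    |mip (Yb - Y) W| ≤
      linfNorm (P * W + W * P - P * W * P) * l1Norm (Matrix.hadamard Jbar (Y - Yb)) +
        opNorm W * ((1 - P) * Y * (1 - P)).trace := by
  change P = clusterProj s c r at hP
  change Yb = clusterBlocks c r at hYb
  subst hP hYb hJbar
  refine abs_mip_sub_le_of_isSymm (clusterProj_isSymm s c r)
    (clusterProj_mul_clusterBlocks r hcount) hY.1 W fun i j => ?_
  by_cases h : c i ≤ r ∨ c j ≤ r
  · exact .inl (if_pos h)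
  · push Not at h
    exact .inr (mul_add_mul_sub_mul_mul_apply_eq_zero (clusterProj_apply_of_lt s c r h.1)
      (clusterProj_apply_of_lt' s c r h.2) W)

/-- Noise term bound in the gap-recovery setup, with
`P∥(W) = QQᵀW + WQQᵀ − QQᵀWQQᵀ` (where `P = QQᵀ`): for any `W` and `Y ∈ F_n`,
`|⟨Ȳ − Y, W⟩| ≤ ‖P∥(W)‖_∞·‖J̄∘(Y−Ȳ)‖₁ + ‖W‖_op·tr((I−QQᵀ)Y(I−QQᵀ))`. -/
theorem gap_recovery_noise_term_bound
    {n K : ℕ} (s : Fin K → ℕ) (hs : Antitone s) (hspos : ∀ k, 0 < s k)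
    (c : Fin n → Fin K) (hc : Monotone c)
    (hcount : ∀ k, (Finset.univ.filter fun i => c i = k).card = s k)
    (r : Fin K)
    (P Yb Jbar : Matrix (Fin n) (Fin n) ℝ)
    (hP : P = Matrix.of fun i j =>
      if c i = c j ∧ c i ≤ r then (1 : ℝ) / (s (c i) : ℝ) else 0)
    (hYb : Yb = Matrix.of fun i j => if c i = c j ∧ c i ≤ r then (1 : ℝ) else 0)
    (hJbar : Jbar = Matrix.of fun i j => if c i ≤ r ∨ c j ≤ r then (1 : ℝ) else 0)
    (W : Matrix (Fin n) (Fin n) ℝ)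
    (Y : Matrix (Fin n) (Fin n) ℝ) (hY : FeasSDP Y) :
    |mip (Yb - Y) W| ≤
      linfNorm (P * W + W * P - P * W * P) * l1Norm (Matrix.hadamard Jbar (Y - Yb)) +
        opNorm W * ((1 - P) * Y * (1 - P)).trace :=
  gap_recovery_noise_term_bound_general s c hcount r P Yb Jbar hP hYb hJbar W Y hY
end

section
/- Let A, A' ∈ ℝ^{n×n} be symmetric matrices, c, λ ∈ ℝ, and let F_n = {Y ∈ ℝ^{n×n} : Y symmetric positive semidefinite, 0 ≤ Y_{ij} ≤ 1 for all i,j}. Suppose Ŷ ∈ F_n is the unique maximizer of ⟨Y, A' − cJ⟩ − λ·tr(Y) over Y ∈ F_n, and suppose that for all i, j: if A_{ij} > A'_{ij} then Ŷ_{ij} = 1, and if A_{ij} < A'_{ij} then Ŷ_{ij} = 0. Then Ŷ is also the unique maximizer of ⟨Y, A − cJ⟩ − λ·tr(Y) over Y ∈ F_n. -/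
open Matrix

/-- `Yhat` is the unique maximizer of `⟨Y, M⟩ − λ tr(Y)` over `F_d`. -/
def IsUniqueMax {d : ℕ} (M : Matrix (Fin d) (Fin d) ℝ) (lam : ℝ)
    (Yhat : Matrix (Fin d) (Fin d) ℝ) : Prop :=
  FeasSDP Yhat ∧ ∀ Y, FeasSDP Y → Y ≠ Yhat →
    mip Y M - lam * Y.trace < mip Yhat M - lam * Yhat.trace

/-- Deterministic core of semirandom robustness: if `Ŷ` is the unique maximizer of the
SDP with input `A'`, and `A` differs from `A'` only by increasing entries where
`Ŷ_{ij} = 1` and decreasing entries where `Ŷ_{ij} = 0`, then `Ŷ` is also the unique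
maximizer of the SDP with input `A`. -/
theorem semirandom_robustness
    {n : ℕ} (A A' : Matrix (Fin n) (Fin n) ℝ)
    (hA : A.IsHermitian) (hA' : A'.IsHermitian)
    (c lam : ℝ) (Yhat : Matrix (Fin n) (Fin n) ℝ)
    (hopt : IsUniqueMax (Matrix.of fun i j => A' i j - c) lam Yhat)
    (hmono : ∀ i j, (A' i j < A i j → Yhat i j = 1) ∧ (A i j < A' i j → Yhat i j = 0)) :
    IsUniqueMax (Matrix.of fun i j => A i j - c) lam Yhat := by
  obtain ⟨hfeas, hstrict⟩ := hopt
  refine ⟨hfeas, fun Y hY hne => ?_⟩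
  have key : ∀ (Z : Matrix (Fin n) (Fin n) ℝ),
      mip Z (Matrix.of fun i j => A i j - c)
        = mip Z (Matrix.of fun i j => A' i j - c) + ∑ i, ∑ j, Z i j * (A i j - A' i j) := by
    intro Z
    simp only [mip, Matrix.of_apply, ← Finset.sum_add_distrib]
    congr 1; ext i; congr 1; ext j; ring
  have hdom : ∑ i, ∑ j, Y i j * (A i j - A' i j)
      ≤ ∑ i, ∑ j, Yhat i j * (A i j - A' i j) := by
    refine Finset.sum_le_sum fun i _ => Finset.sum_le_sum fun j _ => ?_
    rcases lt_trichotomy (A' i j) (A i j) with h | h | h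
    · have h1 : Yhat i j = 1 := (hmono i j).1 h
      have h2 : Y i j ≤ 1 := (hY.2 i j).2
      nlinarith
    · simp [h]
    · have h1 : Yhat i j = 0 := (hmono i j).2 h
      have h2 : 0 ≤ Y i j := (hY.2 i j).1
      nlinarith
  have := hstrict Y hY hne
  rw [key Y, key Yhat]
  linarith
end
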